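/- arXiv:2506.09970 — 2 statements merged into one kernel-verified Lean document; each statement's English description precedes it below -/
import Mathlib

section
/- Let p ∈ (1, ∞) with conjugate exponent p' (1/p + 1/p' = 1), let N ≥ 1 be an integer, and for each k ∈ ℕ let 0 = τ_0^k ≤ τ_1^k ≤ … ≤ τ_N^k be real numbers such that for every j ∈ {0, …, N}, τ_j^k → τ_j^∞ in [0, +∞] as k → ∞. For each j ∈ {1, …, N} let u_j^k ∈ L^p((0,∞), ℝ^m) with sup_k ‖u_j^k‖_{L^p} < ∞ and such that u_j^k converges weakly to u_j^∞ ∈ L^p((0,∞), ℝ^m), i.e. ∫_0^∞ (u_j^k(t) − u_j^∞(t))·g(t) dt → 0 for every g ∈ L^{p'}((0,∞), ℝ^m). Define u_k = Σ_{j=1}^N u_j^k · 1_{[τ_{j-1}^k, τ_j^k)} and u_∞ = Σ_{j=1}^N u_j^∞ · 1_{[τ_{j-1}^∞, τ_j^∞)} (with the convention that [+∞, +∞) = ∅ and [a, +∞) is the unbounded half-line when the right endpoint is +∞). Then u_k → u_∞ in the sense of distributions: for every continuous φ : (0,∞) → ℝ^m with compact support contained in (0,∞), ∫_0^∞ u_k(t)·φ(t)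 dt → ∫_0^∞ u_∞(t)·φ(t) dt as k → ∞. -/
/-!
Treat each piece separately and move its indicator onto the test function:
`∫ 1_{I_k} u_k · φ = ∫ u_k · (1_{I_k} φ)`. Off the two limit endpoints, `1_{I_k}(t)` is eventually
`1_I(t)`, so `1_{I_k} φ → 1_I φ` in `L^{p'}` by dominated convergence. Then
`∫ u_k · 1_{I_k} φ - ∫ u · 1_I φ = ∫ u_k · (1_{I_k} φ - 1_I φ) + ∫ (u_k - u) · 1_I φ`:
the first term is at most `C ‖1_{I_k} φ - 1_I φ‖_{p'}` by Hölder and the `L^p` bound, and the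
second tends to zero by weak convergence.
-/
open Filter Topology MeasureTheory
open scoped ENNReal NNReal

lemma nnnorm_dotProduct_le {ι : Type*} [Fintype ι] (v w : ι → ℝ) :
    ‖v ⬝ᵥ w‖₊ ≤ Fintype.card ι * ‖v‖₊ * ‖w‖₊ :=
  calc ‖∑ i, v i * w i‖₊ ≤ ∑ i, ‖v i * w i‖₊ := nnnorm_sum_le _ _
    _ ≤ ∑ _i : ι, ‖v‖₊ * ‖w‖₊ := Finset.sum_le_sum fun i _ => by
        rw [nnnorm_mul]; exact mul_le_mul' (nnnorm_le_pi_nnnorm v i) (nnnorm_le_pi_nnnorm w i)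
    _ = Fintype.card ι * ‖v‖₊ * ‖w‖₊ := by simp [mul_assoc]

lemma Set.indicator_dotProduct {α ι : Type*} [Fintype ι] (s : Set α) (f g : α → ι → ℝ) (x : α) :
    s.indicator f x ⬝ᵥ g x = f x ⬝ᵥ s.indicator g x := by
  by_cases hx : x ∈ s <;> simp [hx]

lemma norm_indicator_sub_indicator_le {α E : Type*} [SeminormedAddCommGroup E] (s t : Set α)
    (f : α → E) (x : α) : ‖s.indicator f x - t.indicator f x‖ ≤ ‖f x‖ := by
  by_cases hs : x ∈ s <;> by_cases ht : x ∈ t <;> simp [hs, ht]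

lemma eventually_mem_Ico_iff_of_tendsto {α β : Type*} [LinearOrder α] [TopologicalSpace α]
    [OrderTopology α] {l : Filter β} {a b : β → α} {A B t : α}
    (ha : Tendsto a l (𝓝 A)) (hb : Tendsto b l (𝓝 B)) (hA : t ≠ A) (hB : t ≠ B) :
    ∀ᶠ k in l, (t ∈ Set.Ico (a k) (b k) ↔ t ∈ Set.Ico A B) := by
  have hleft : ∀ᶠ k in l, (a k ≤ t ↔ A ≤ t) := by
    rcases hA.lt_or_gt with h | h
    · filter_upwards [ha.eventually (lt_mem_nhds h)] with k hk
      simp only [not_le.2 hk, not_le.2 h]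
    · filter_upwards [ha.eventually (gt_mem_nhds h)] with k hk
      simp only [hk.le, h.le]
  have hright : ∀ᶠ k in l, (t < b k ↔ t < B) := by
    rcases hB.lt_or_gt with h | h
    · filter_upwards [hb.eventually (lt_mem_nhds h)] with k hk
      simp only [hk, h]
    · filter_upwards [hb.eventually (gt_mem_nhds h)] with k hk
      simp only [not_lt.2 hk.le, not_lt.2 h.le]
  filter_upwards [hleft, hright] with k h₁ h₂
  rw [Set.mem_Ico, Set.mem_Ico, h₁, h₂]

lemma ae_coe_ereal_ne {μ : Measure ℝ} [NullSingletonClass μ] (A : EReal) :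
    ∀ᵐ t : ℝ ∂μ, (t : EReal) ≠ A :=
  measure_eq_zero_iff_ae_notMem.1 <|
    Set.Subsingleton.measure_zero (s := {t : ℝ | (t : EReal) = A})
      (fun _ hx _ hy => EReal.coe_injective (hx.trans hy.symm)) μ

section Lp

variable {α : Type*} [MeasurableSpace α] {μ : Measure α}

theorem tendsto_eLpNorm_zero_of_dominated {E F : Type*} [NormedAddCommGroup E]
    [NormedAddCommGroup F] {q : ℝ≥0∞} (hq : q ≠ ∞) {f : ℕ → α → E} {g : α → F}
    (hf : ∀ k, AEStronglyMeasurable (f k) μ) (hg : MemLp g q μ)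
    (hbound : ∀ k, ∀ᵐ x ∂μ, ‖f k x‖ ≤ ‖g x‖)
    (hlim : ∀ᵐ x ∂μ, Tendsto (fun k => f k x) atTop (𝓝 0)) :
    Tendsto (fun k => eLpNorm (f k) q μ) atTop (𝓝 0) := by
  obtain rfl | hq0 := eq_or_ne q 0
  · simp
  simp_rw [eLpNorm_eq_lintegral_rpow_enorm_toReal hq0 hq]
  have hq_pos : 0 < q.toReal := ENNReal.toReal_pos hq0 hq
  have hlint : Tendsto (fun k => ∫⁻ x, ‖f k x‖ₑ ^ q.toReal ∂μ) atTop (𝓝 0) := by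
    simpa using tendsto_lintegral_of_dominated_convergence' (f := fun _ => 0)
      (fun x => ‖g x‖ₑ ^ q.toReal)
      (fun k => (hf k).enorm.pow_const _)
      (fun k => (hbound k).mono fun x hx =>
        ENNReal.rpow_le_rpow (enorm_le_iff_norm_le.2 hx) hq_pos.le)
      (lintegral_rpow_enorm_lt_top_of_eLpNorm_lt_top hq0 hq hg.2).ne
      (hlim.mono fun x hx => by
        simpa [ENNReal.zero_rpow_of_pos hq_pos] using
          (tendsto_zero_iff_enorm_tendsto_zero.1 hx).ennrpow_const q.toReal)
  simpa [ENNReal.zero_rpow_of_pos (inv_pos.2 hq_pos)] using hlint.ennrpow_const (1 / q.toReal)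

variable {ι : Type*} [Fintype ι] {p q : ℝ≥0∞} [p.HolderConjugate q]

lemma aestronglyMeasurable_dotProduct {f g : α → ι → ℝ} (hf : AEStronglyMeasurable f μ)
    (hg : AEStronglyMeasurable g μ) : AEStronglyMeasurable (fun x => f x ⬝ᵥ g x) μ :=
  (continuous_fst.dotProduct continuous_snd).comp_aestronglyMeasurable₂ hf hg

lemma MeasureTheory.MemLp.integrable_dotProduct {f g : α → ι → ℝ} (hf : MemLp f p μ)
    (hg : MemLp g q μ) : Integrable (fun x => f x ⬝ᵥ g x) μ :=
  memLp_one_iff_integrable.1 <| hf.of_bilin (· ⬝ᵥ ·) (Fintype.card ι) hg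
    (aestronglyMeasurable_dotProduct hf.1 hg.1) (ae_of_all _ fun _ => nnnorm_dotProduct_le _ _)

lemma enorm_integral_dotProduct_le {f g : α → ι → ℝ} (hf : AEStronglyMeasurable f μ)
    (hg : AEStronglyMeasurable g μ) :
    ‖∫ x, f x ⬝ᵥ g x ∂μ‖ₑ ≤ Fintype.card ι * eLpNorm f p μ * eLpNorm g q μ :=
  calc ‖∫ x, f x ⬝ᵥ g x ∂μ‖ₑ ≤ ∫⁻ x, ‖f x ⬝ᵥ g x‖ₑ ∂μ := enorm_integral_le_lintegral_enorm _
    _ = eLpNorm (fun x => f x ⬝ᵥ g x) 1 μ := eLpNorm_one_eq_lintegral_enorm.symm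
    _ ≤ _ := by
      simpa using eLpNorm_le_eLpNorm_mul_eLpNorm_of_nnnorm (p := p) (q := q) hf hg (· ⬝ᵥ ·)
        (Fintype.card ι) (ae_of_all _ fun _ => nnnorm_dotProduct_le _ _)

theorem tendsto_integral_dotProduct_of_weak_of_tendsto_eLpNorm {u : ℕ → α → ι → ℝ}
    {v : α → ι → ℝ} {g : ℕ → α → ι → ℝ} {h : α → ι → ℝ} (C : ℝ≥0)
    (hu : ∀ k, MemLp (u k) p μ) (hC : ∀ k, eLpNorm (u k) p μ ≤ C) (hv : MemLp v p μ)
    (hweak : ∀ w, MemLp w q μ → Tendsto (fun k => ∫ x, (u k x - v x) ⬝ᵥ w x ∂μ) atTop (𝓝 0))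
    (hg : ∀ k, MemLp (g k) q μ) (hh : MemLp h q μ)
    (hgh : Tendsto (fun k => eLpNorm (g k - h) q μ) atTop (𝓝 0)) :
    Tendsto (fun k => ∫ x, u k x ⬝ᵥ g k x ∂μ) atTop (𝓝 (∫ x, v x ⬝ᵥ h x ∂μ)) := by
  have hsplit : ∀ k, ∫ x, u k x ⬝ᵥ g k x ∂μ = ∫ x, u k x ⬝ᵥ (g k - h) x ∂μ +
      ∫ x, (u k x - v x) ⬝ᵥ h x ∂μ + ∫ x, v x ⬝ᵥ h x ∂μ := by
    intro k
    have hi₁ := (hu k).integrable_dotProduct ((hg k).sub hh)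
    have hi₂ : Integrable (fun x => (u k x - v x) ⬝ᵥ h x) μ :=
      ((hu k).sub hv).integrable_dotProduct hh
    rw [← integral_add hi₁ hi₂, ← integral_add (hi₁.fun_add hi₂) (hv.integrable_dotProduct hh)]
    congr 1 with x
    simp only [Pi.sub_apply, dotProduct_sub, sub_dotProduct]
    ring
  have hsmall : Tendsto (fun k => ∫ x, u k x ⬝ᵥ (g k - h) x ∂μ) atTop (𝓝 0) := by
    rw [tendsto_zero_iff_enorm_tendsto_zero]
    have hbound : Tendsto (fun k => (Fintype.card ι * C : ℝ≥0∞) * eLpNorm (g k - h) q μ) atTop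
        (𝓝 0) := by
      simpa using ENNReal.Tendsto.const_mul hgh (Or.inr (by finiteness))
    refine tendsto_of_tendsto_of_tendsto_of_le_of_le tendsto_const_nhds hbound (fun _ => zero_le)
      fun k => ?_
    calc ‖∫ x, u k x ⬝ᵥ (g k - h) x ∂μ‖ₑ
        ≤ Fintype.card ι * eLpNorm (u k) p μ * eLpNorm (g k - h) q μ :=
          enorm_integral_dotProduct_le (hu k).1 ((hg k).sub hh).1
      _ ≤ Fintype.card ι * C * eLpNorm (g k - h) q μ := by gcongr; exact hC k
  simpa [hsplit] using (hsmall.add (hweak h hh)).add_const (∫ x, v x ⬝ᵥ h x ∂μ)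

lemma integral_sum_dotProduct {β : Type*} {s : Finset β} {f : β → α → ι → ℝ} {g : α → ι → ℝ}
    (hf : ∀ j ∈ s, Integrable (fun x => f j x ⬝ᵥ g x) μ) :
    ∫ x, (∑ j ∈ s, f j x) ⬝ᵥ g x ∂μ = ∑ j ∈ s, ∫ x, f j x ⬝ᵥ g x ∂μ := by
  simp_rw [sum_dotProduct]
  exact integral_finsetSum s hf

end Lp

section Piecewise

variable {μ : Measure ℝ} [NullSingletonClass μ] {ι : Type*} [Fintype ι]
  {p q : ℝ≥0∞} [p.HolderConjugate q]

theorem tendsto_eLpNorm_indicator_Ico_sub {E : Type*} [NormedAddCommGroup E] (hq : q ≠ ∞)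
    {a b : ℕ → ℝ} {A B : EReal} (ha : Tendsto (fun k => (a k : EReal)) atTop (𝓝 A))
    (hb : Tendsto (fun k => (b k : EReal)) atTop (𝓝 B)) {φ : ℝ → E} (hφ : MemLp φ q μ) :
    Tendsto (fun k => eLpNorm ((Set.Ico (a k) (b k)).indicator φ -
      (((↑) : ℝ → EReal) ⁻¹' Set.Ico A B).indicator φ) q μ) atTop (𝓝 0) := by
  refine tendsto_eLpNorm_zero_of_dominated hq
    (fun k => (hφ.1.indicator measurableSet_Ico).sub
      (hφ.1.indicator (measurable_coe_real_ereal measurableSet_Ico)))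
    hφ (fun k => ae_of_all _ fun x => norm_indicator_sub_indicator_le _ _ φ x) ?_
  filter_upwards [ae_coe_ereal_ne A, ae_coe_ereal_ne B] with t hA hB
  refine tendsto_const_nhds.congr' ?_
  filter_upwards [eventually_mem_Ico_iff_of_tendsto ha hb hA hB] with k hk
  have hmem : t ∈ Set.Ico (a k) (b k) ↔ t ∈ ((↑) : ℝ → EReal) ⁻¹' Set.Ico A B := by
    simpa using hk
  by_cases ht : t ∈ Set.Ico (a k) (b k)
  · simp [Set.indicator_of_mem ht, Set.indicator_of_mem (hmem.1 ht)]
  · simp [Set.indicator_of_notMem ht, Set.indicator_of_notMem (mt hmem.2 ht)]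

theorem tendsto_integral_indicator_Ico_dotProduct (hq : q ≠ ∞)
    {a b : ℕ → ℝ} {A B : EReal} (ha : Tendsto (fun k => (a k : EReal)) atTop (𝓝 A))
    (hb : Tendsto (fun k => (b k : EReal)) atTop (𝓝 B))
    {u : ℕ → ℝ → ι → ℝ} {v : ℝ → ι → ℝ} (C : ℝ≥0)
    (hu : ∀ k, MemLp (u k) p μ) (hC : ∀ k, eLpNorm (u k) p μ ≤ C) (hv : MemLp v p μ)
    (hweak : ∀ w, MemLp w q μ → Tendsto (fun k => ∫ x, (u k x - v x) ⬝ᵥ w x ∂μ) atTop (𝓝 0))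
    {φ : ℝ → ι → ℝ} (hφ : MemLp φ q μ) :
    Tendsto (fun k => ∫ x, (Set.Ico (a k) (b k)).indicator (u k) x ⬝ᵥ φ x ∂μ) atTop
      (𝓝 (∫ x, (((↑) : ℝ → EReal) ⁻¹' Set.Ico A B).indicator v x ⬝ᵥ φ x ∂μ)) := by
  have hS : MeasurableSet (((↑) : ℝ → EReal) ⁻¹' Set.Ico A B) :=
    measurable_coe_real_ereal measurableSet_Ico
  simp_rw [Set.indicator_dotProduct]
  exact tendsto_integral_dotProduct_of_weak_of_tendsto_eLpNorm C hu hC hv hweak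
    (fun k => hφ.indicator measurableSet_Ico) (hφ.indicator hS)
    (tendsto_eLpNorm_indicator_Ico_sub hq ha hb hφ)

end Piecewise

theorem piecewise_controls_tendsto_distributions_general
    {m N : ℕ} (p p' : ℝ) (hp : 1 < p) (hpp' : 1 / p + 1 / p' = 1)
    (τ : ℕ → Fin (N + 1) → ℝ) (τlim : Fin (N + 1) → EReal)
    (hτconv : ∀ j : Fin (N + 1),
      Tendsto (fun k => ((τ k j : ℝ) : EReal)) atTop (𝓝 (τlim j)))
    (u : Fin N → ℕ → ℝ → (Fin m → ℝ)) (ulim : Fin N → ℝ → (Fin m → ℝ))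
    (hmem : ∀ j k, MemLp (u j k) (ENNReal.ofReal p) (volume.restrict (Set.Ioi 0)))
    (hmemlim : ∀ j, MemLp (ulim j) (ENNReal.ofReal p) (volume.restrict (Set.Ioi 0)))
    (hbdd : ∀ j, ∃ C : ℝ, ∀ k,
      eLpNorm (u j k) (ENNReal.ofReal p) (volume.restrict (Set.Ioi 0)) ≤ ENNReal.ofReal C)
    (hweak : ∀ j, ∀ g : ℝ → (Fin m → ℝ),
      MemLp g (ENNReal.ofReal p') (volume.restrict (Set.Ioi 0)) →
      Tendsto (fun k => ∫ t in Set.Ioi 0, ∑ i, (u j k t i - ulim j t i) * g t i)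
        atTop (𝓝 0)) :
    ∀ φ : ℝ → (Fin m → ℝ), Continuous φ → HasCompactSupport φ →
      tsupport φ ⊆ Set.Ioi 0 →
      Tendsto
        (fun k => ∫ t in Set.Ioi 0,
          ∑ i, (∑ j : Fin N,
            Set.indicator (Set.Ico (τ k j.castSucc) (τ k j.succ)) (u j k) t) i * φ t i)
        atTop
        (𝓝 (∫ t in Set.Ioi 0,
          ∑ i, (∑ j : Fin N,
            Set.indicator {s : ℝ | τlim j.castSucc ≤ (s : EReal) ∧ (s : EReal) < τlim j.succ}
              (ulim j) t) i * φ t i)) := by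
  intro φ hφc hφs _
  have := (Real.holderConjugate_iff.2 ⟨hp, by simpa [one_div] using hpp'⟩).ennrealOfReal
  have hφ : MemLp φ (ENNReal.ofReal p') (volume.restrict (Set.Ioi 0)) :=
    hφc.memLp_of_hasCompactSupport hφs
  -- `ENNReal.ofReal C` is by definition the coercion of `C.toNNReal`.
  have hpiece j := tendsto_integral_indicator_Ico_dotProduct ENNReal.ofReal_ne_top
    (hτconv j.castSucc) (hτconv j.succ) (hbdd j).choose.toNNReal (hmem j) (hbdd j).choose_spec
    (hmemlim j) (hweak j) hφ
  -- Up to unfolding, the integrands are `dotProduct`s and the limit sets are `(↑) ⁻¹' Ico`.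
  convert tendsto_finsetSum Finset.univ fun j _ => hpiece j using 2
  · exact integral_sum_dotProduct fun j _ =>
      ((hmem j _).indicator measurableSet_Ico).integrable_dotProduct hφ
  · exact integral_sum_dotProduct fun j _ =>
      ((hmemlim j).indicator (measurable_coe_real_ereal measurableSet_Ico)).integrable_dotProduct hφ

/-- piecewise-defined controls built from weakly convergent pieces on
converging partitions converge in the sense of distributions to the corresponding
piecewise limit control. -/
theorem piecewise_controls_tendsto_distributions
    {m N : ℕ} (hN : 1 ≤ N) (p p' : ℝ) (hp : 1 < p) (hpp' : 1 / p + 1 / p' = 1)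
    (τ : ℕ → Fin (N + 1) → ℝ) (τlim : Fin (N + 1) → EReal)
    (hτ0 : ∀ k, τ k 0 = 0) (hτmono : ∀ k, Monotone (τ k))
    (hτconv : ∀ j : Fin (N + 1),
      Tendsto (fun k => ((τ k j : ℝ) : EReal)) atTop (𝓝 (τlim j)))
    (u : Fin N → ℕ → ℝ → (Fin m → ℝ)) (ulim : Fin N → ℝ → (Fin m → ℝ))
    (hmem : ∀ j k, MemLp (u j k) (ENNReal.ofReal p) (volume.restrict (Set.Ioi 0)))
    (hmemlim : ∀ j, MemLp (ulim j) (ENNReal.ofReal p) (volume.restrict (Set.Ioi 0)))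
    (hbdd : ∀ j, ∃ C : ℝ, ∀ k,
      eLpNorm (u j k) (ENNReal.ofReal p) (volume.restrict (Set.Ioi 0)) ≤ ENNReal.ofReal C)
    (hweak : ∀ j, ∀ g : ℝ → (Fin m → ℝ),
      MemLp g (ENNReal.ofReal p') (volume.restrict (Set.Ioi 0)) →
      Tendsto (fun k => ∫ t in Set.Ioi 0, ∑ i, (u j k t i - ulim j t i) * g t i)
        atTop (𝓝 0)) :
    ∀ φ : ℝ → (Fin m → ℝ), Continuous φ → HasCompactSupport φ →
      tsupport φ ⊆ Set.Ioi 0 →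
      Tendsto
        (fun k => ∫ t in Set.Ioi 0,
          ∑ i, (∑ j : Fin N,
            Set.indicator (Set.Ico (τ k j.castSucc) (τ k j.succ)) (u j k) t) i * φ t i)
        atTop
        (𝓝 (∫ t in Set.Ioi 0,
          ∑ i, (∑ j : Fin N,
            Set.indicator {s : ℝ | τlim j.castSucc ≤ (s : EReal) ∧ (s : EReal) < τlim j.succ}
              (ulim j) t) i * φ t i)) :=
  piecewise_controls_tendsto_distributions_general p p' hp hpp' τ τlim hτconv u ulim hmem hmemlim
    hbdd hweak
end

section
/- Let p ∈ (1, ∞) with conjugate exponent p', and let a : [0, ∞) × ℝ^n → ℝ^n and b : [0, ∞) × ℝ^n → ℝ^{n×m} be Borel measurable maps satisfying: there exist measurable M, N : [0, ∞) → [0, ∞) with ∫_0^T M dt < ∞ and ∫_0^T N^{p'} dt < ∞ for every T > 0 such that |a(t, 0)| ≤ M(t) and |b(t, 0)| ≤ N(t) for a.e. t ≥ 0; and for every compact H ⊂ ℝ^n there exist measurable A_H, B_H : [0, ∞) → [0, ∞) with ∫_0^T A_H dt < ∞ and ∫_0^T B_H^{p'} dt < ∞ for every T > 0 such that |a(t,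 x_1) − a(t, x_2)| ≤ A_H(t)|x_1 − x_2| and |b(t, x_1) − b(t, x_2)| ≤ B_H(t)|x_1 − x_2| for all x_1, x_2 ∈ H and a.e. t ≥ 0. Let u_k, u ∈ L^p((0, ∞), ℝ^m) with sup_k ‖u_k‖_{L^p} < ∞ and ∫_0^∞ (u_k − u)·g dt → 0 for every g ∈ L^{p'}((0, ∞), ℝ^m). Let x_0 ∈ ℝ^n and let x_k, x : [0, ∞) → ℝ^n be continuous functions such that x_k → x uniformly on every compact subset of [0, ∞) and x_k(t) = x_0 + ∫_0^t [a(τ, x_k(τ)) + b(τ, x_k(τ)) u_k(τ)] dτ for all t ≥ 0 and all k. Then x(t) = x_0 + ∫_0^t [a(τ, x(τ)) + b(τ, x(τ)) u(τ)] dτ for all t ≥ 0. -/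
/-!
On `[0, t]` the trajectories eventually stay in a fixed ball, on which `a` and `b` are Lipschitz
with constants `A ∈ L¹` and `B ∈ Lᵖ'`. Split
`a(xₖ) + b(xₖ)uₖ - a(x) - b(x)u = (a(xₖ) - a(x)) + (b(xₖ) - b(x))uₖ + b(x)(uₖ - u)`.
The integrals of the first two terms are bounded by `sup ‖xₖ - x‖` times `‖A‖₁`, resp. times
`‖B‖_p' · supₖ ‖uₖ‖_p` (Hölder), so they vanish in the limit. The third one vanishes by weak
convergence, tested against the rows of `b(τ, x(τ))` on `(0, t]`, which lie in `Lᵖ'` by the growth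
bound on `b`. Letting `k → ∞` in the integral equation of `xₖ` gives the one of `x`.
-/

open Filter Topology MeasureTheory Set Metric
open scoped ENNReal

section

variable {α ι E F G : Type*} [MeasurableSpace α] {μ : Measure α} {l : Filter ι}
  [NormedAddCommGroup E] [NormedAddCommGroup F] [NormedAddCommGroup G] [NormedSpace ℝ G]

lemma memLp_ofReal_of_integrable_rpow {f : α → ℝ} {q : ℝ} (hq : 0 < q) (hf : Measurable f)
    (hf0 : ∀ τ, 0 ≤ f τ) (hint : Integrable (fun τ => f τ ^ q) μ) :
    MemLp f (ENNReal.ofReal q) μ := by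
  refine (integrable_norm_rpow_iff hf.aestronglyMeasurable (by simpa using hq)
    ENNReal.ofReal_ne_top).1 ?_
  convert hint using 2 with τ
  rw [ENNReal.toReal_ofReal hq.le, Real.norm_of_nonneg (hf0 τ)]

lemma MeasureTheory.MemLp.integrable_clm_apply [NormedSpace ℝ F] {p q : ℝ≥0∞}
    [p.HolderConjugate q] {Φ : α → G →L[ℝ] F} {v : α → G} (hΦ : MemLp Φ q μ) (hv : MemLp v p μ) :
    Integrable (fun τ => Φ τ (v τ)) μ := by
  rw [← memLp_one_iff_integrable]
  refine hΦ.of_bilin (r := 1) (fun L w => L w) 1 hv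
    ((ContinuousLinearMap.id ℝ (G →L[ℝ] F)).aestronglyMeasurable_comp₂ hΦ.1 hv.1) ?_
  exact ae_of_all _ fun τ => by simpa using (Φ τ).le_opNNNorm (v τ)

lemma integral_norm_smul_le_eLpNorm_mul_eLpNorm {p q : ℝ≥0∞} [p.HolderConjugate q] {φ : α → ℝ}
    {v : α → G} (hφ : MemLp φ q μ) (hv : MemLp v p μ) :
    ∫ τ, ‖φ τ • v τ‖ ∂μ ≤ (eLpNorm φ q μ * eLpNorm v p μ).toReal := by
  have hφv : AEStronglyMeasurable (φ • v) μ := hφ.1.smul hv.1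
  change ∫ τ, ‖(φ • v) τ‖ ∂μ ≤ _
  rw [integral_norm_eq_lintegral_enorm hφv, ← eLpNorm_one_eq_lintegral_enorm]
  exact ENNReal.toReal_mono (ENNReal.mul_ne_top hφ.2.ne hv.2.ne)
    (eLpNorm_smul_le_mul_eLpNorm hv.1 hφ.1)

lemma memLp_apply_of_lipschitzOn_closedBall {r : ℝ≥0∞} {f : α → E → F} {y : α → E}
    {M A : α → ℝ} {R : ℝ} (hfy : AEStronglyMeasurable (fun τ => f τ (y τ)) μ)
    (hM : MemLp M r μ) (hA : MemLp A r μ) (hf0 : ∀ᵐ τ ∂μ, ‖f τ 0‖ ≤ M τ)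
    (hLip : ∀ᵐ τ ∂μ, ∀ x₁ ∈ closedBall (0 : E) R, ∀ x₂ ∈ closedBall (0 : E) R,
      ‖f τ x₁ - f τ x₂‖ ≤ A τ * ‖x₁ - x₂‖)
    (hy : ∀ᵐ τ ∂μ, y τ ∈ closedBall (0 : E) R) :
    MemLp (fun τ => f τ (y τ)) r μ := by
  refine (hM.add (hA.norm.const_mul R)).of_le hfy ?_
  filter_upwards [hf0, hLip, hy] with τ h0 hL hyR
  have hyR' : ‖y τ‖ ≤ R := mem_closedBall_zero_iff.1 hyR
  have hL0 := hL _ hyR 0 (mem_closedBall_self ((norm_nonneg _).trans hyR'))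
  rw [sub_zero] at hL0
  calc ‖f τ (y τ)‖ ≤ ‖f τ 0‖ + ‖f τ (y τ) - f τ 0‖ := norm_le_norm_add_norm_sub' _ _
    _ ≤ M τ + ‖A τ‖ * R := by
        gcongr
        exact hL0.trans (by gcongr; exact le_abs_self _)
    _ ≤ ‖(M + (fun τ => R * ‖A τ‖)) τ‖ := by
        rw [Pi.add_apply, mul_comm]; exact le_abs_self _

lemma tendsto_integral_zero_of_norm_le_mul [NormedSpace ℝ F] {f : ι → α → F} {g : ι → α → ℝ}
    {C : ℝ} (hg : ∀ k, Integrable (g k) μ) (hgC : ∀ k, ∫ τ, g k τ ∂μ ≤ C)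
    (hfg : ∀ δ > 0, ∀ᶠ k in l, ∀ᵐ τ ∂μ, ‖f k τ‖ ≤ δ * g k τ) :
    Tendsto (fun k => ∫ τ, f k τ ∂μ) l (𝓝 0) := by
  refine NormedAddGroup.tendsto_nhds_zero.2 fun ε hε => ?_
  have hC : 0 < |C| + 1 := by positivity
  filter_upwards [hfg _ (div_pos hε hC)] with k hk
  calc ‖∫ τ, f k τ ∂μ‖ ≤ ∫ τ, ε / (|C| + 1) * g k τ ∂μ :=
        norm_integral_le_of_norm_le ((hg k).const_mul _) hk
    _ = ε / (|C| + 1) * ∫ τ, g k τ ∂μ := integral_const_mul _ _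
    _ ≤ ε / (|C| + 1) * |C| := by gcongr; exact (hgC k).trans (le_abs_self C)
    _ < ε := by rw [div_mul_eq_mul_div, div_lt_iff₀ hC]; linarith

variable {H : Set E} {y : ι → α → E} {y₀ : α → E}

lemma tendsto_integral_sub_of_lipschitzOn [NormedSpace ℝ F] {a : α → E → F} {A : α → ℝ}
    (hA : Integrable A μ)
    (hLip : ∀ᵐ τ ∂μ, ∀ x₁ ∈ H, ∀ x₂ ∈ H, ‖a τ x₁ - a τ x₂‖ ≤ A τ * ‖x₁ - x₂‖)
    (hyH : ∀ᶠ k in l, ∀ᵐ τ ∂μ, y k τ ∈ H) (hy₀H : ∀ᵐ τ ∂μ, y₀ τ ∈ H)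
    (hy : ∀ δ > 0, ∀ᶠ k in l, ∀ᵐ τ ∂μ, ‖y k τ - y₀ τ‖ ≤ δ) :
    Tendsto (fun k => ∫ τ, (a τ (y k τ) - a τ (y₀ τ)) ∂μ) l (𝓝 0) := by
  refine tendsto_integral_zero_of_norm_le_mul (fun _ => hA.norm) (fun _ => le_rfl)
    fun δ hδ => ?_
  filter_upwards [hy δ hδ, hyH] with k hk hkH
  filter_upwards [hk, hkH, hLip, hy₀H] with τ hτ hτH hτLip hτ₀
  calc ‖a τ (y k τ) - a τ (y₀ τ)‖ ≤ A τ * ‖y k τ - y₀ τ‖ := hτLip _ hτH _ hτ₀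
    _ ≤ ‖A τ‖ * δ := by gcongr; exact le_abs_self _
    _ = δ * ‖A τ‖ := mul_comm _ _

lemma tendsto_integral_sub_apply_of_lipschitzOn [NormedSpace ℝ F] {p q : ℝ≥0∞}
    [p.HolderConjugate q] {b : α → E → G →L[ℝ] F} {B : α → ℝ} {v : ι → α → G} {C : ℝ≥0∞}
    (hB : MemLp B q μ)
    (hLip : ∀ᵐ τ ∂μ, ∀ x₁ ∈ H, ∀ x₂ ∈ H, ‖b τ x₁ - b τ x₂‖ ≤ B τ * ‖x₁ - x₂‖)
    (hyH : ∀ᶠ k in l, ∀ᵐ τ ∂μ, y k τ ∈ H) (hy₀H : ∀ᵐ τ ∂μ, y₀ τ ∈ H)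
    (hy : ∀ δ > 0, ∀ᶠ k in l, ∀ᵐ τ ∂μ, ‖y k τ - y₀ τ‖ ≤ δ)
    (hv : ∀ k, MemLp (v k) p μ) (hC : C ≠ ∞) (hvC : ∀ k, eLpNorm (v k) p μ ≤ C) :
    Tendsto (fun k => ∫ τ, (b τ (y k τ) - b τ (y₀ τ)) (v k τ) ∂μ) l (𝓝 0) := by
  refine tendsto_integral_zero_of_norm_le_mul (g := fun k τ => ‖B τ • v k τ‖)
    (C := (eLpNorm B q μ * C).toReal)
    (fun k => (memLp_one_iff_integrable.1 ((hv k).smul hB)).norm)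
    (fun k => (integral_norm_smul_le_eLpNorm_mul_eLpNorm hB (hv k)).trans
      (ENNReal.toReal_mono (ENNReal.mul_ne_top hB.2.ne hC) (by gcongr; exact hvC k)))
    fun δ hδ => ?_
  filter_upwards [hy δ hδ, hyH] with k hk hkH
  filter_upwards [hk, hkH, hLip, hy₀H] with τ hτ hτH hτLip hτ₀
  calc ‖(b τ (y k τ) - b τ (y₀ τ)) (v k τ)‖
      ≤ ‖b τ (y k τ) - b τ (y₀ τ)‖ * ‖v k τ‖ := ContinuousLinearMap.le_opNorm _ _
    _ ≤ B τ * ‖y k τ - y₀ τ‖ * ‖v k τ‖ := by gcongr; exact hτLip _ hτH _ hτ₀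
    _ ≤ ‖B τ‖ * δ * ‖v k τ‖ := by gcongr; exact le_abs_self _
    _ = δ * ‖B τ • v k τ‖ := by rw [norm_smul]; ring

end

section WeakConvergence

variable {α ι κ κ' : Type*} [MeasurableSpace α] [Fintype κ] {μ : Measure α} {l : Filter ι}
  {q : ℝ≥0∞} {v : ι → α → κ → ℝ} {v₀ : α → κ → ℝ}

/-- `q` is the exponent of the test functions, i.e. the conjugate of the exponent `p` of the space
`Lᵖ(μ)` in which `v k ⇀ v₀`. -/
def WeaklyTendsto (q : ℝ≥0∞) (μ : Measure α) (l : Filter ι) (v : ι → α → κ → ℝ)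
    (v₀ : α → κ → ℝ) : Prop :=
  ∀ g : α → κ → ℝ, MemLp g q μ →
    Tendsto (fun k => ∫ τ, ∑ i, (v k τ i - v₀ τ i) * g τ i ∂μ) l (𝓝 0)

lemma WeaklyTendsto.restrict (h : WeaklyTendsto q μ l v v₀) {s : Set α} (hs : MeasurableSet s) :
    WeaklyTendsto q (μ.restrict s) l v v₀ := by
  intro g hg
  refine (h (s.indicator g) ((memLp_indicator_iff_restrict hs).2 hg)).congr fun k => ?_
  rw [← integral_indicator hs]
  congr 1 with τ
  by_cases hτ : τ ∈ s <;> simp [hτ]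

lemma ContinuousLinearMap.apply_eq_sum_mul_apply_single [DecidableEq κ]
    (L : (κ → ℝ) →L[ℝ] (κ' → ℝ)) (w : κ → ℝ) (i : κ') :
    L w i = ∑ j, w j * L (Pi.single j 1) i := by
  have hw : ∑ j, w j • Pi.single j (1 : ℝ) = w := by
    ext; simp [Finset.sum_apply, Pi.single_apply]
  conv_lhs => rw [← hw]
  simp [map_sum, Finset.sum_apply]

lemma WeaklyTendsto.tendsto_integral_clm_apply [DecidableEq κ] [Fintype κ']
    (h : WeaklyTendsto q μ l v v₀) {Φ : α → (κ → ℝ) →L[ℝ] (κ' → ℝ)} (hΦ : MemLp Φ q μ)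
    (hint : ∀ k, Integrable (fun τ => Φ τ (v k τ - v₀ τ)) μ) :
    Tendsto (fun k => ∫ τ, Φ τ (v k τ - v₀ τ) ∂μ) l (𝓝 0) := by
  refine tendsto_pi_nhds.2 fun i => ?_
  let row : ((κ → ℝ) →L[ℝ] (κ' → ℝ)) →L[ℝ] (κ → ℝ) := ContinuousLinearMap.pi fun j =>
    (ContinuousLinearMap.proj (R := ℝ) (φ := fun _ : κ' => ℝ) i).comp
      (ContinuousLinearMap.apply ℝ (κ' → ℝ) (Pi.single j 1))
  refine (h _ (row.comp_memLp' hΦ)).congr fun k => ?_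
  have hcomm := (ContinuousLinearMap.proj (R := ℝ) (φ := fun _ : κ' => ℝ) i).integral_comp_comm
    (hint k)
  rw [ContinuousLinearMap.proj_apply] at hcomm
  rw [← hcomm]
  congr 1 with τ
  rw [ContinuousLinearMap.proj_apply, (Φ τ).apply_eq_sum_mul_apply_single]
  rfl

end WeakConvergence

theorem tendsto_integral_controlAffine_of_weaklyTendsto {α ι κ κ' E : Type*} [MeasurableSpace α]
    [Fintype κ] [DecidableEq κ] [Fintype κ'] [NormedAddCommGroup E] [MeasurableSpace E]
    {μ : Measure α} {l : Filter ι} {p q : ℝ≥0∞} [p.HolderConjugate q]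
    {a : α → E → (κ' → ℝ)} {b : α → E → (κ → ℝ) →L[ℝ] (κ' → ℝ)}
    (ha : StronglyMeasurable (Function.uncurry a)) (hb : StronglyMeasurable (Function.uncurry b))
    {M N A B : α → ℝ} (hM : Integrable M μ) (hN : MemLp N q μ) (hA : Integrable A μ)
    (hB : MemLp B q μ) (ha0 : ∀ᵐ τ ∂μ, ‖a τ 0‖ ≤ M τ) (hb0 : ∀ᵐ τ ∂μ, ‖b τ 0‖ ≤ N τ) {R : ℝ}
    (hLip : ∀ᵐ τ ∂μ, ∀ x₁ ∈ closedBall (0 : E) R, ∀ x₂ ∈ closedBall (0 : E) R,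
      ‖a τ x₁ - a τ x₂‖ ≤ A τ * ‖x₁ - x₂‖ ∧ ‖b τ x₁ - b τ x₂‖ ≤ B τ * ‖x₁ - x₂‖)
    {y : ι → α → E} {y₀ : α → E} (hym : ∀ k, Measurable (y k)) (hy₀m : Measurable y₀)
    (hyR : ∀ᶠ k in l, ∀ᵐ τ ∂μ, y k τ ∈ closedBall (0 : E) R)
    (hy₀R : ∀ᵐ τ ∂μ, y₀ τ ∈ closedBall (0 : E) R)
    (hy : ∀ δ > 0, ∀ᶠ k in l, ∀ᵐ τ ∂μ, ‖y k τ - y₀ τ‖ ≤ δ)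
    {v : ι → α → κ → ℝ} {v₀ : α → κ → ℝ} (hv : ∀ k, MemLp (v k) p μ) (hv₀ : MemLp v₀ p μ)
    {C : ℝ≥0∞} (hC : C ≠ ∞) (hvC : ∀ k, eLpNorm (v k) p μ ≤ C)
    (hweak : WeaklyTendsto q μ l v v₀) :
    Tendsto (fun k => ∫ τ, (a τ (y k τ) + b τ (y k τ) (v k τ)) ∂μ) l
      (𝓝 (∫ τ, (a τ (y₀ τ) + b τ (y₀ τ) (v₀ τ)) ∂μ)) := by
  have hLipa := hLip.mono fun _ h x₁ h₁ x₂ h₂ => (h x₁ h₁ x₂ h₂).1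
  have hLipb := hLip.mono fun _ h x₁ h₁ x₂ h₂ => (h x₁ h₁ x₂ h₂).2
  have hay : ∀ z : α → E, Measurable z → (∀ᵐ τ ∂μ, z τ ∈ closedBall (0 : E) R) →
      Integrable (fun τ => a τ (z τ)) μ := fun z hz hzR =>
    memLp_one_iff_integrable.1 <| memLp_apply_of_lipschitzOn_closedBall
      (ha.comp_measurable (measurable_id.prodMk hz)).aestronglyMeasurable
      (memLp_one_iff_integrable.2 hM) (memLp_one_iff_integrable.2 hA) ha0 hLipa hzR
  have hby : ∀ z : α → E, Measurable z → (∀ᵐ τ ∂μ, z τ ∈ closedBall (0 : E) R) →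
      MemLp (fun τ => b τ (z τ)) q μ := fun z hz hzR =>
    memLp_apply_of_lipschitzOn_closedBall
      (hb.comp_measurable (measurable_id.prodMk hz)).aestronglyMeasurable hN hB hb0 hLipb hzR
  have hlim := ((tendsto_integral_sub_of_lipschitzOn hA hLipa hyR hy₀R hy).add
    (tendsto_integral_sub_apply_of_lipschitzOn hB hLipb hyR hy₀R hy hv hC hvC)).add
    (hweak.tendsto_integral_clm_apply (hby y₀ hy₀m hy₀R)
      fun k => (hby y₀ hy₀m hy₀R).integrable_clm_apply ((hv k).sub hv₀))
  rw [add_zero, add_zero] at hlim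
  refine tendsto_sub_nhds_zero_iff.1 (hlim.congr' ?_)
  filter_upwards [hyR] with k hk
  have hbyk := hby (y k) (hym k) hk
  have hby₀ := hby y₀ hy₀m hy₀R
  have hX : Integrable (fun τ => a τ (y k τ) - a τ (y₀ τ)) μ :=
    (hay _ (hym k) hk).sub (hay y₀ hy₀m hy₀R)
  have hY : Integrable (fun τ => (b τ (y k τ) - b τ (y₀ τ)) (v k τ)) μ :=
    (hbyk.sub hby₀).integrable_clm_apply (hv k)
  have hZ : Integrable (fun τ => b τ (y₀ τ) (v k τ - v₀ τ)) μ :=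
    hby₀.integrable_clm_apply ((hv k).sub hv₀)
  have hFk : Integrable (fun τ => a τ (y k τ) + b τ (y k τ) (v k τ)) μ :=
    (hay _ (hym k) hk).add (hbyk.integrable_clm_apply (hv k))
  have hF : Integrable (fun τ => a τ (y₀ τ) + b τ (y₀ τ) (v₀ τ)) μ :=
    (hay y₀ hy₀m hy₀R).add (hby₀.integrable_clm_apply hv₀)
  rw [← integral_add hX hY, ← integral_add (f := fun τ => a τ (y k τ) - a τ (y₀ τ) +
    (b τ (y k τ) - b τ (y₀ τ)) (v k τ)) (hX.add hY) hZ, ← integral_sub hFk hF]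
  congr 1; funext τ
  simp only [sub_apply, map_sub]
  abel

section UniformConvergence

variable {α ι E : Type*} [MeasurableSpace α] [NormedAddCommGroup E] {μ : Measure α}
  {l : Filter ι} {F : ι → α → E} {f : α → E} {s : Set α}

lemma TendstoUniformlyOn.eventually_ae_restrict_norm_sub_le (h : TendstoUniformlyOn F f l s)
    (hs : MeasurableSet s) : ∀ δ > 0, ∀ᶠ k in l, ∀ᵐ τ ∂μ.restrict s, ‖F k τ - f τ‖ ≤ δ := by
  intro δ hδ
  filter_upwards [Metric.tendstoUniformlyOn_iff.1 h δ hδ] with k hk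
  exact ae_restrict_of_forall_mem hs fun τ hτ => by
    rw [← dist_eq_norm, dist_comm]; exact (hk τ hτ).le

lemma TendstoUniformlyOn.eventually_ae_restrict_mem_closedBall (h : TendstoUniformlyOn F f l s)
    (hs : MeasurableSet s) {R : ℝ} (hf : ∀ τ ∈ s, ‖f τ‖ ≤ R) :
    ∀ᶠ k in l, ∀ᵐ τ ∂μ.restrict s, F k τ ∈ closedBall (0 : E) (R + 1) := by
  filter_upwards [h.eventually_ae_restrict_norm_sub_le hs 1 one_pos] with k hk
  filter_upwards [hk, ae_restrict_mem hs] with τ hτ hτs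
  rw [mem_closedBall_zero_iff]
  linarith [norm_le_norm_add_norm_sub' (F k τ) (f τ), hf τ hτs]

end UniformConvergence

theorem gamma_closure_admissible_set_general
    {n m : ℕ} (p p' : ℝ) (hp : 1 < p) (hpp' : 1 / p + 1 / p' = 1)
    (a : ℝ → (Fin n → ℝ) → (Fin n → ℝ))
    (b : ℝ → (Fin n → ℝ) → ((Fin m → ℝ) →L[ℝ] (Fin n → ℝ)))
    (hameas : StronglyMeasurable (Function.uncurry a))
    (hbmeas : StronglyMeasurable (Function.uncurry b))
    (M N : ℝ → ℝ) (hNmeas : Measurable N)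
    (hNnonneg : ∀ t, 0 ≤ N t)
    (hMint : ∀ T > (0 : ℝ), IntegrableOn M (Set.Ioc 0 T))
    (hNint : ∀ T > (0 : ℝ), IntegrableOn (fun t => N t ^ p') (Set.Ioc 0 T))
    (haM : ∀ᵐ t ∂(volume.restrict (Set.Ioi 0)), ‖a t 0‖ ≤ M t)
    (hbN : ∀ᵐ t ∂(volume.restrict (Set.Ioi 0)), ‖b t 0‖ ≤ N t)
    (hLip : ∀ H : Set (Fin n → ℝ), IsCompact H →
      ∃ AH BH : ℝ → ℝ, Measurable AH ∧ Measurable BH ∧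
        (∀ t, 0 ≤ AH t) ∧ (∀ t, 0 ≤ BH t) ∧
        (∀ T > (0 : ℝ), IntegrableOn AH (Set.Ioc 0 T)) ∧
        (∀ T > (0 : ℝ), IntegrableOn (fun t => BH t ^ p') (Set.Ioc 0 T)) ∧
        (∀ᵐ t ∂(volume.restrict (Set.Ioi 0)), ∀ x₁ ∈ H, ∀ x₂ ∈ H,
          ‖a t x₁ - a t x₂‖ ≤ AH t * ‖x₁ - x₂‖ ∧
          ‖b t x₁ - b t x₂‖ ≤ BH t * ‖x₁ - x₂‖))
    (u : ℝ → (Fin m → ℝ)) (uk : ℕ → ℝ → (Fin m → ℝ))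
    (humem : MemLp u (ENNReal.ofReal p) (volume.restrict (Set.Ioi 0)))
    (hukmem : ∀ k, MemLp (uk k) (ENNReal.ofReal p) (volume.restrict (Set.Ioi 0)))
    (hukbdd : ∃ C : ℝ, ∀ k,
      eLpNorm (uk k) (ENNReal.ofReal p) (volume.restrict (Set.Ioi 0)) ≤ ENNReal.ofReal C)
    (hweak : ∀ g : ℝ → (Fin m → ℝ),
      MemLp g (ENNReal.ofReal p') (volume.restrict (Set.Ioi 0)) →
      Tendsto (fun k => ∫ t in Set.Ioi 0, ∑ i, (uk k t i - u t i) * g t i) atTop (𝓝 0))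
    (x₀ : Fin n → ℝ) (x : ℝ → (Fin n → ℝ)) (xk : ℕ → ℝ → (Fin n → ℝ))
    (hxcont : Continuous x) (hxkcont : ∀ k, Continuous (xk k))
    (hunif : ∀ K : Set ℝ, IsCompact K → K ⊆ Set.Ici 0 →
      TendstoUniformlyOn xk x atTop K)
    (hxkeq : ∀ k, ∀ t ≥ (0 : ℝ),
      xk k t = x₀ + ∫ τ in Set.Ioc 0 t, (a τ (xk k τ) + b τ (xk k τ) (uk k τ))) :
    ∀ t ≥ (0 : ℝ), x t = x₀ + ∫ τ in Set.Ioc 0 t, (a τ (x τ) + b τ (x τ) (u τ)) := by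
  intro t ht
  have hS : MeasurableSet (Ioc 0 t) := measurableSet_Ioc
  have hμ : volume.restrict (Ioc 0 t) ≤ volume.restrict (Ioi 0) :=
    Measure.restrict_mono Ioc_subset_Ioi_self le_rfl
  have hloc : ∀ f : ℝ → ℝ, (∀ T > (0 : ℝ), IntegrableOn f (Ioc 0 T)) → IntegrableOn f (Ioc 0 t) :=
    fun f hf => (hf (t + 1) (by linarith)).mono_set (Ioc_subset_Ioc_right (by linarith))
  have hpp'_conj : p.HolderConjugate p' :=
    Real.holderConjugate_iff.2 ⟨hp, by simpa only [one_div] using hpp'⟩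
  have hp' : 0 < p' := hpp'_conj.symm.left_pos
  have hpq := hpp'_conj.ennrealOfReal
  have hUK : TendstoUniformlyOn xk x atTop (Icc 0 t) := hunif _ isCompact_Icc fun _ h => h.1
  have hUS := hUK.mono Ioc_subset_Icc_self
  obtain ⟨R, hR⟩ := (isCompact_Icc.image hxcont).isBounded.exists_norm_le
  have hxR : ∀ τ ∈ Ioc 0 t, ‖x τ‖ ≤ R := fun τ hτ => hR _ ⟨τ, Ioc_subset_Icc_self hτ, rfl⟩
  obtain ⟨A, B, -, hBm, -, hB0, hAint, hBint, hLipR⟩ := hLip _ (isCompact_closedBall 0 (R + 1))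
  obtain ⟨C, hC⟩ := hukbdd
  have hlim := tendsto_integral_controlAffine_of_weaklyTendsto hameas hbmeas (hloc M hMint)
    (memLp_ofReal_of_integrable_rpow hp' hNmeas hNnonneg (hloc _ hNint)) (hloc A hAint)
    (memLp_ofReal_of_integrable_rpow hp' hBm hB0 (hloc _ hBint))
    (ae_mono hμ haM) (ae_mono hμ hbN) (ae_mono hμ hLipR) (fun k => (hxkcont k).measurable)
    hxcont.measurable (hUS.eventually_ae_restrict_mem_closedBall hS hxR)
    (ae_restrict_of_forall_mem hS fun τ hτ =>
      mem_closedBall_zero_iff.2 ((hxR τ hτ).trans (by linarith)))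
    (hUS.eventually_ae_restrict_norm_sub_le hS)
    (fun k => (hukmem k).mono_measure hμ) (humem.mono_measure hμ) ENNReal.ofReal_ne_top
    (fun k => (eLpNorm_mono_measure _ hμ).trans (hC k))
    (by simpa only [Measure.restrict_restrict_of_subset Ioc_subset_Ioi_self] using
      (show WeaklyTendsto _ _ _ uk u from hweak).restrict hS)
  exact tendsto_nhds_unique (hUK.tendsto_at ⟨ht, le_rfl⟩)
    ((tendsto_const_nhds.add hlim).congr fun k => (hxkeq k t ht).symm)

/-- Γ-closure of the admissible set (part 1 of Lemma 5.4): if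
controls converge weakly in L^p and the corresponding Carathéodory solutions
converge locally uniformly, the limit state solves the limit controlled ODE. -/
theorem gamma_closure_admissible_set
    {n m : ℕ} (p p' : ℝ) (hp : 1 < p) (hpp' : 1 / p + 1 / p' = 1)
    (a : ℝ → (Fin n → ℝ) → (Fin n → ℝ))
    (b : ℝ → (Fin n → ℝ) → ((Fin m → ℝ) →L[ℝ] (Fin n → ℝ)))
    (hameas : StronglyMeasurable (Function.uncurry a))
    (hbmeas : StronglyMeasurable (Function.uncurry b))
    (M N : ℝ → ℝ) (hMmeas : Measurable M) (hNmeas : Measurable N)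
    (hMnonneg : ∀ t, 0 ≤ M t) (hNnonneg : ∀ t, 0 ≤ N t)
    (hMint : ∀ T > (0 : ℝ), IntegrableOn M (Set.Ioc 0 T))
    (hNint : ∀ T > (0 : ℝ), IntegrableOn (fun t => N t ^ p') (Set.Ioc 0 T))
    (haM : ∀ᵐ t ∂(volume.restrict (Set.Ioi 0)), ‖a t 0‖ ≤ M t)
    (hbN : ∀ᵐ t ∂(volume.restrict (Set.Ioi 0)), ‖b t 0‖ ≤ N t)
    (hLip : ∀ H : Set (Fin n → ℝ), IsCompact H →
      ∃ AH BH : ℝ → ℝ, Measurable AH ∧ Measurable BH ∧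
        (∀ t, 0 ≤ AH t) ∧ (∀ t, 0 ≤ BH t) ∧
        (∀ T > (0 : ℝ), IntegrableOn AH (Set.Ioc 0 T)) ∧
        (∀ T > (0 : ℝ), IntegrableOn (fun t => BH t ^ p') (Set.Ioc 0 T)) ∧
        (∀ᵐ t ∂(volume.restrict (Set.Ioi 0)), ∀ x₁ ∈ H, ∀ x₂ ∈ H,
          ‖a t x₁ - a t x₂‖ ≤ AH t * ‖x₁ - x₂‖ ∧
          ‖b t x₁ - b t x₂‖ ≤ BH t * ‖x₁ - x₂‖))
    (u : ℝ → (Fin m → ℝ)) (uk : ℕ → ℝ → (Fin m → ℝ))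
    (humem : MemLp u (ENNReal.ofReal p) (volume.restrict (Set.Ioi 0)))
    (hukmem : ∀ k, MemLp (uk k) (ENNReal.ofReal p) (volume.restrict (Set.Ioi 0)))
    (hukbdd : ∃ C : ℝ, ∀ k,
      eLpNorm (uk k) (ENNReal.ofReal p) (volume.restrict (Set.Ioi 0)) ≤ ENNReal.ofReal C)
    (hweak : ∀ g : ℝ → (Fin m → ℝ),
      MemLp g (ENNReal.ofReal p') (volume.restrict (Set.Ioi 0)) →
      Tendsto (fun k => ∫ t in Set.Ioi 0, ∑ i, (uk k t i - u t i) * g t i) atTop (𝓝 0))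
    (x₀ : Fin n → ℝ) (x : ℝ → (Fin n → ℝ)) (xk : ℕ → ℝ → (Fin n → ℝ))
    (hxcont : Continuous x) (hxkcont : ∀ k, Continuous (xk k))
    (hunif : ∀ K : Set ℝ, IsCompact K → K ⊆ Set.Ici 0 →
      TendstoUniformlyOn xk x atTop K)
    (hxkeq : ∀ k, ∀ t ≥ (0 : ℝ),
      xk k t = x₀ + ∫ τ in Set.Ioc 0 t, (a τ (xk k τ) + b τ (xk k τ) (uk k τ))) :
    ∀ t ≥ (0 : ℝ), x t = x₀ + ∫ τ in Set.Ioc 0 t, (a τ (x τ) + b τ (x τ) (u τ)) :=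
  gamma_closure_admissible_set_general p p' hp hpp' a b hameas hbmeas M N hNmeas hNnonneg hMint
    hNint haM hbN hLip u uk humem hukmem hukbdd hweak x₀ x xk hxcont hxkcont hunif hxkeq
end
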